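/- For a half-synchronized subshift X with half-synchronizing word w, a vertex v of the Krieger graph K_X belongs to the Fischer graph F_X if and only if there is a finite path in K_X from foll(w) to v. -/
import Mathlib


namespace Paper

variable {A B C : Type*}

def shiftMap (x : ℤ → A) : ℤ → A := fun i => x (i + 1)

def shiftInvMap (x : ℤ → A) : ℤ → A := fun i => x (i - 1)

/-- A subshift: nonempty, shift-invariant (both directions), and closed
(expressed combinatorially: any configuration all of whose central patterns
are approximated by members is a member). -/
def IsSubshift (X : Set (ℤ → A)) : Prop :=
  X.Nonempty ∧ (∀ x ∈ X, shiftMap x ∈ X) ∧ (∀ x ∈ X, shiftInvMap x ∈ X) ∧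
  ∀ x : ℤ → A, (∀ n : ℕ, ∃ y ∈ X, ∀ i : ℤ, |i| ≤ (n : ℤ) → y i = x i) → x ∈ X

/-- The word `x[i, i+k-1]`. -/
def cfgWord (x : ℤ → A) (i : ℤ) (k : ℕ) : List A :=
  List.ofFn (fun t : Fin k => x (i + ((t : ℕ) : ℤ)))

/-- The language of a set of configurations. -/
def lang (X : Set (ℤ → A)) : Set (List A) := {w | ∃ x ∈ X, ∃ i : ℤ, cfgWord x i w.length = w}

def TransitiveShift (X : Set (ℤ → A)) : Prop :=
  ∀ u ∈ lang X, ∀ v ∈ lang X, ∃ w : List A, u ++ w ++ v ∈ lang X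

/-- Left ray of a configuration: `leftRay x n = x (-1-n)`. -/
def leftRay (x : ℤ → A) : ℕ → A := fun n => x (-1 - (n : ℤ))

def rightRay (x : ℤ → A) : ℕ → A := fun n => x (n : ℤ)

def LeftRays (X : Set (ℤ → A)) : Set (ℕ → A) := leftRay '' X

def RightRays (X : Set (ℤ → A)) : Set (ℕ → A) := rightRay '' X

/-- Glue a left ray and a right ray into a configuration. -/
def glue (l r : ℕ → A) : ℤ → A := fun i => if 0 ≤ i then r i.toNat else l (-1 - i).toNat

/-- Follower set of a left-infinite sequence. -/
def foll (X : Set (ℤ → A)) (l : ℕ → A) : Set (ℕ → A) := {r | glue l r ∈ X}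

def wordThen (w : List A) (r : ℕ → A) : ℕ → A :=
  fun n => if h : n < w.length then w.get ⟨n, h⟩ else r (n - w.length)

/-- Follower set of a word. -/
def follW (X : Set (ℤ → A)) (w : List A) : Set (ℕ → A) := {r | wordThen w r ∈ RightRays X}

def occursInLeft (l : ℕ → A) (w : List A) : Prop :=
  ∃ j : ℕ, ∀ k : Fin w.length, l (j + (w.length - 1 - (k : ℕ))) = w.get k

/-- The language of a left-infinite sequence. -/
def langL (l : ℕ → A) : Set (List A) := {w | occursInLeft l w}

/-- The left ray `l` ends with the word `w`. -/
def raySuffix (l : ℕ → A) (w : List A) : Prop :=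
  ∀ k : Fin w.length, l (w.length - 1 - (k : ℕ)) = w.get k

def HalfSyncWord (X : Set (ℤ → A)) (w : List A) : Prop :=
  w ∈ lang X ∧ ∃ l ∈ LeftRays X, raySuffix l w ∧ langL l = lang X ∧ foll X l = follW X w

def HalfSynchronized (X : Set (ℤ → A)) : Prop := TransitiveShift X ∧ ∃ w, HalfSyncWord X w

def SyncWord (X : Set (ℤ → A)) (w : List A) : Prop :=
  w ∈ lang X ∧ ∀ l ∈ LeftRays X, raySuffix l w → foll X l = follW X w

def Synchronized (X : Set (ℤ → A)) : Prop := TransitiveShift X ∧ ∃ w, SyncWord X w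

/-- Product of two subshifts, over the product alphabet. -/
def prodShift (Y : Set (ℤ → B)) (Z : Set (ℤ → C)) : Set (ℤ → B × C) :=
  {x | (fun i => (x i).1) ∈ Y ∧ (fun i => (x i).2) ∈ Z}

/-- Identification of a pair of sets of right rays with a set of right rays
over the product alphabet. -/
def prodRaySet (S : Set (ℕ → B)) (T : Set (ℕ → C)) : Set (ℕ → B × C) :=
  {r | (fun n => (r n).1) ∈ S ∧ (fun n => (r n).2) ∈ T}

/-- Extend a left ray by one more symbol on the right. -/
def extendRay (l : ℕ → A) (a : A) : ℕ → A := fun n => if n = 0 then a else l (n - 1)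

/-- Edge of the Krieger graph from `u` to `v` labeled `a`. -/
def KEdge (X : Set (ℤ → A)) (u : Set (ℕ → A)) (a : A) (v : Set (ℕ → A)) : Prop :=
  ∃ l ∈ LeftRays X, extendRay l a ∈ LeftRays X ∧ u = foll X l ∧ v = foll X (extendRay l a)

def KStep (X : Set (ℤ → A)) (u v : Set (ℕ → A)) : Prop := ∃ a, KEdge X u a v

/-- Existence of a finite path in the Krieger graph. -/
def KReach (X : Set (ℤ → A)) : Set (ℕ → A) → Set (ℕ → A) → Prop :=
  Relation.ReflTransGen (KStep X)

def KVertex (X : Set (ℤ → A)) (v : Set (ℕ → A)) : Prop := ∃ l ∈ LeftRays X, v = foll X l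

/-- A subshift is sofic iff it has finitely many follower sets. -/
def Sofic (X : Set (ℤ → A)) : Prop := {v : Set (ℕ → A) | KVertex X v}.Finite

/-- Vertex of the Fischer graph (w.r.t. half-synchronizing word `w`): a vertex of the
Krieger graph in the maximal strongly connected subgraph containing `foll w`. -/
def FVertex (X : Set (ℤ → A)) (w : List A) (v : Set (ℕ → A)) : Prop :=
  KVertex X v ∧ KReach X (follW X w) v ∧ KReach X v (follW X w)

/-- Directed (multi)graph with vertex type `V` and edge type `E`. -/
structure DiGraph (V : Type*) (E : Type*) where
  ini : E → V
  ter : E → V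

variable {V E V' E' : Type*}

/-- Bi-infinite path on a graph. -/
def BiPath (G : DiGraph V E) (x : ℤ → E) : Prop := ∀ i : ℤ, G.ter (x i) = G.ini (x (i + 1))

/-- `p` is a finite path of `m+1` edges. -/
def FinPath (G : DiGraph V E) (m : ℕ) (p : Fin (m + 1) → E) : Prop :=
  ∀ k : Fin m, G.ter (p k.castSucc) = G.ini (p k.succ)

/-- The subpath `x[i, i+n]` of a bi-infinite path is a shortest path between its endpoints. -/
def GeodesicSeg (G : DiGraph V E) (x : ℤ → E) (i : ℤ) (n : ℕ) : Prop :=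
  ∀ (m : ℕ) (p : Fin (m + 1) → E), FinPath G m p →
    G.ini (p 0) = G.ini (x i) → G.ter (p (Fin.last m)) = G.ter (x (i + (n : ℤ))) → n ≤ m

def EvGeodesic (G : DiGraph V E) (x : ℤ → E) : Prop :=
  ∃ i₀ : ℤ, ∀ i : ℤ, i₀ ≤ i → ∀ n : ℕ, GeodesicSeg G x i n

/-- Strictly proximal pair of bi-infinite paths. -/
def StrictProxPair (x y : ℤ → E) : Prop :=
  (∀ n : ℕ, ∃ i : ℕ, ∀ k : ℕ, k ≤ n → x ((i : ℤ) + (k : ℤ)) = y ((i : ℤ) + (k : ℤ))) ∧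
  ∀ N : ℕ, ∃ i : ℕ, N ≤ i ∧ x ((i : ℕ) : ℤ) ≠ y ((i : ℕ) : ℤ)

def HasEvGeoProxPair (G : DiGraph V E) : Prop :=
  ∃ x y : ℤ → E, BiPath G x ∧ BiPath G y ∧ EvGeodesic G x ∧ EvGeodesic G y ∧ StrictProxPair x y

/-- Edges of the Fischer graph: Krieger edges between Fischer vertices. -/
def FischerE (X : Set (ℤ → A)) (w : List A) : Type _ :=
  {t : Set (ℕ → A) × A × Set (ℕ → A) //
    FVertex X w t.1 ∧ FVertex X w t.2.2 ∧ KEdge X t.1 t.2.1 t.2.2}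

def FischerGraph (X : Set (ℤ → A)) (w : List A) : DiGraph (Set (ℕ → A)) (FischerE X w) :=
  ⟨fun e => e.1.1, fun e => e.1.2.2⟩

def SlidingBlockCode (X : Set (ℤ → A)) (F : (ℤ → A) → (ℤ → B)) : Prop :=
  ∃ (r : ℕ) (f : (Fin (2 * r + 1) → A) → B),
    ∀ x ∈ X, ∀ i : ℤ, F x i = f (fun k => x (i + ((k : ℕ) : ℤ) - (r : ℤ)))

def ShiftConjugate (X : Set (ℤ → A)) (Y : Set (ℤ → B)) : Prop :=
  ∃ F : (ℤ → A) → (ℤ → B), SlidingBlockCode X F ∧ Set.InjOn F X ∧ F '' X = Y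

def DirectPrime (X : Set (ℤ → A)) : Prop :=
  ∀ (B C : Type) (_ : Finite B) (_ : Finite C) (Y : Set (ℤ → B)) (Z : Set (ℤ → C)),
    IsSubshift Y → IsSubshift Z → ShiftConjugate X (prodShift Y Z) →
    (∃ y, Y = {y}) ∨ (∃ z, Z = {z})

section Aux

variable {X : Set (ℤ → A)}

def consRay (a : A) (r : ℕ → A) : ℕ → A := fun n => if n = 0 then a else r (n - 1)

def extendW (l : ℕ → A) (s : List A) : ℕ → A := s.foldl extendRay l

lemma wordThen_nil (r : ℕ → A) : wordThen [] r = r := by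
  funext n; simp [wordThen]

lemma wordThen_cons (a : A) (s : List A) (r : ℕ → A) :
    wordThen (a :: s) r = consRay a (wordThen s r) := by
  funext n
  rcases n with _ | m
  · simp [wordThen, consRay]
  · simp only [wordThen, consRay, List.length_cons]
    rcases lt_or_ge m s.length with h | h
    · simp [Nat.succ_lt_succ h, h, List.get_cons_succ]
    · rw [dif_neg (by omega : ¬ (m + 1 < s.length + 1)), if_neg (Nat.succ_ne_zero m)]
      simp only [Nat.add_sub_cancel]
      rw [dif_neg (Nat.not_lt.2 h)]
      congr 1
      omega

lemma wordThen_append (s t : List A) (r : ℕ → A) :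
    wordThen (s ++ t) r = wordThen s (wordThen t r) := by
  induction s with
  | nil => simp [wordThen_nil]
  | cons a s ih => simp [List.cons_append, wordThen_cons, ih]

lemma wordThen_singleton (a : A) (r : ℕ → A) : wordThen [a] r = consRay a r := by
  rw [wordThen_cons, wordThen_nil]

lemma shiftMap_mem_iff (hX : IsSubshift X) {x : ℤ → A} : shiftMap x ∈ X ↔ x ∈ X := by
  constructor
  · intro h
    have := hX.2.2.1 _ h
    have hxe : shiftInvMap (shiftMap x) = x := by
      funext i; simp [shiftMap, shiftInvMap]
    rwa [hxe] at this
  · exact fun h => hX.2.1 _ h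

lemma glue_extendRay (l : ℕ → A) (a : A) (r : ℕ → A) :
    glue (extendRay l a) r = shiftMap (glue l (consRay a r)) := by
  funext i
  simp only [glue, extendRay, consRay, shiftMap]
  rcases lt_trichotomy i (-1) with h | h | h
  · have h0 : ¬ (0 : ℤ) ≤ i := by omega
    have h1 : ¬ (0 : ℤ) ≤ i + 1 := by omega
    have h2 : ¬ ((-1 - i).toNat = 0) := by omega
    simp only [h0, h1, h2, if_false, if_neg]
    congr 1
    omega
  · subst h; norm_num
  · have h0 : (0 : ℤ) ≤ i := by omega
    have h1 : (0 : ℤ) ≤ i + 1 := by omega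
    have h2 : ¬ ((i + 1).toNat = 0) := by omega
    simp only [h0, h1, h2, if_true, if_false, if_neg]
    congr 1
    omega

lemma foll_extendRay (hX : IsSubshift X) (l : ℕ → A) (a : A) :
    foll X (extendRay l a) = {r | consRay a r ∈ foll X l} := by
  ext r
  simp only [foll, Set.mem_setOf_eq, glue_extendRay]
  exact shiftMap_mem_iff hX

lemma extendW_cons (l : ℕ → A) (a : A) (s : List A) :
    extendW l (a :: s) = extendW (extendRay l a) s := rfl

lemma foll_extendW (hX : IsSubshift X) (l : ℕ → A) (s : List A) :
    foll X (extendW l s) = {r | wordThen s r ∈ foll X l} := by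
  induction s generalizing l with
  | nil => simp [extendW, wordThen_nil]
  | cons a s ih =>
    rw [extendW_cons, ih, foll_extendRay hX]
    ext r
    simp [wordThen_cons]

lemma leftRay_glue (l r : ℕ → A) : leftRay (glue l r) = l := by
  funext n
  have h : ¬ (0 : ℤ) ≤ -1 - (n : ℤ) := by omega
  simp only [leftRay, glue, h, if_false]
  congr 1
  omega

lemma glue_leftRay_rightRay (x : ℤ → A) : glue (leftRay x) (rightRay x) = x := by
  funext i
  simp only [glue, leftRay, rightRay]
  split_ifs with h
  · congr 1; omega
  · congr 1; omega

lemma mem_leftRays_iff (X : Set (ℤ → A)) (l : ℕ → A) :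
    l ∈ LeftRays X ↔ (foll X l).Nonempty := by
  constructor
  · rintro ⟨x, hx, rfl⟩
    exact ⟨rightRay x, by simpa [foll, glue_leftRay_rightRay] using hx⟩
  · rintro ⟨r, hr⟩
    exact ⟨glue l r, hr, leftRay_glue l r⟩

lemma kedge_foll (hX : IsSubshift X) (l : ℕ → A) (a : A)
    (h : (foll X (extendRay l a)).Nonempty) :
    KEdge X (foll X l) a (foll X (extendRay l a)) := by
  have h0 : (foll X l).Nonempty := by
    obtain ⟨r, hr⟩ := h
    rw [foll_extendRay hX] at hr
    exact ⟨_, hr⟩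
  exact ⟨l, (mem_leftRays_iff X l).2 h0, (mem_leftRays_iff X _).2 h, rfl, rfl⟩

lemma kreach_extendW (hX : IsSubshift X) (l : ℕ → A) (s : List A)
    (h : (foll X (extendW l s)).Nonempty) :
    KReach X (foll X l) (foll X (extendW l s)) := by
  induction s generalizing l with
  | nil => exact Relation.ReflTransGen.refl
  | cons a s ih =>
    rw [extendW_cons] at h ⊢
    have h2 : (foll X (extendRay l a)).Nonempty := by
      obtain ⟨r, hr⟩ := h
      rw [foll_extendW hX] at hr
      exact ⟨_, hr⟩
    exact Relation.ReflTransGen.head ⟨a, kedge_foll hX l a h2⟩ (ih _ h)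

lemma follW_append (s t : List A) :
    follW X (s ++ t) = {r | wordThen t r ∈ follW X s} := by
  ext r
  simp [follW, wordThen_append]

lemma shiftInvMap_iterate (x : ℤ → A) (k : ℕ) (i : ℤ) :
    (shiftInvMap^[k] x) i = x (i - k) := by
  induction k generalizing i with
  | zero => simp
  | succ n ih =>
    rw [Function.iterate_succ_apply']
    simp only [shiftInvMap, ih]
    congr 1
    push_cast
    ring

lemma shiftMap_iterate (x : ℤ → A) (k : ℕ) (i : ℤ) :
    (shiftMap^[k] x) i = x (i + k) := by
  induction k generalizing i with
  | zero => simp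
  | succ n ih =>
    rw [Function.iterate_succ_apply']
    simp only [shiftMap, ih]
    congr 1
    push_cast
    ring

lemma iterate_mem (hX : IsSubshift X) {x : ℤ → A} (hx : x ∈ X) (k : ℕ) :
    shiftInvMap^[k] x ∈ X := by
  induction k with
  | zero => exact hx
  | succ n ih => rw [Function.iterate_succ_apply']; exact hX.2.2.1 _ ih

lemma iterate_mem' (hX : IsSubshift X) {x : ℤ → A} (hx : x ∈ X) (k : ℕ) :
    shiftMap^[k] x ∈ X := by
  induction k with
  | zero => exact hx
  | succ n ih => rw [Function.iterate_succ_apply']; exact hX.2.1 _ ih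

lemma foll_subset_follW (hX : IsSubshift X) {l : ℕ → A} {m : List A}
    (h : raySuffix l m) : foll X l ⊆ follW X m := by
  intro r hr
  refine ⟨shiftInvMap^[m.length] (glue l r), iterate_mem hX hr m.length, ?_⟩
  funext n
  rw [rightRay, shiftInvMap_iterate]
  simp only [wordThen, glue]
  by_cases hn : n < m.length
  · have h0 : ¬ (0 : ℤ) ≤ (n : ℤ) - m.length := by omega
    rw [dif_pos hn, if_neg h0]
    have := h ⟨n, hn⟩
    rw [← this]
    congr 1
    simp only [Fin.val_mk]
    omega
  · have h0 : (0 : ℤ) ≤ (n : ℤ) - m.length := by omega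
    rw [dif_neg hn, if_pos h0]
    congr 1
    omega

lemma follW_prefix_subset (hX : IsSubshift X) (p m : List A) :
    follW X (p ++ m) ⊆ follW X m := by
  intro r hr
  obtain ⟨x, hx, hxr⟩ := hr
  refine ⟨shiftMap^[p.length] x, iterate_mem' hX hx p.length, ?_⟩
  funext n
  rw [rightRay, shiftMap_iterate]
  have : x ((n : ℤ) + p.length) = rightRay x (n + p.length) := by
    simp only [rightRay]
    congr 1 <;> omega
  rw [this, hxr, wordThen_append]
  simp only [wordThen]
  rw [dif_neg (show ¬ (n + p.length < p.length) by omega)]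
  all_goals simp only [Nat.add_sub_cancel]

lemma raySuffix_decomp {l : ℕ → A} {m m' : List A}
    (hm : raySuffix l m) (hm' : raySuffix l m') (h : m.length ≤ m'.length) :
    ∃ p, m' = p ++ m := by
  refine ⟨m'.take (m'.length - m.length), ?_⟩
  have hd : m'.drop (m'.length - m.length) = m := by
    apply List.ext_getElem
    · simp; omega
    · intro i h1 h2
      rw [List.getElem_drop]
      have e1 := hm' ⟨m'.length - m.length + i, by omega⟩
      have e2 := hm ⟨i, h2⟩
      simp only [List.get_eq_getElem] at e1 e2
      rw [← e1, ← e2]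
      congr 1
      omega
  conv_lhs => rw [← List.take_append_drop (m'.length - m.length) m', hd]

lemma extendW_apply (l : ℕ → A) (s : List A) (n : ℕ) :
    extendW l s n = if h : n < s.length then s.get ⟨s.length - 1 - n, by omega⟩
      else l (n - s.length) := by
  induction s generalizing l n with
  | nil => simp [extendW]
  | cons a s ih =>
    rw [extendW_cons, ih]
    rcases lt_trichotomy n s.length with h | h | h
    · rw [dif_pos h, dif_pos (by simp; omega)]
      have : (a :: s).length - 1 - n = (s.length - 1 - n) + 1 := by simp; omega
      simp only [this, List.get_cons_succ]
    · subst h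
      rw [dif_neg (by omega), dif_pos (by simp)]
      simp only [extendRay, Nat.sub_self, if_pos rfl]
      have : (a :: s).length - 1 - s.length = 0 := by simp
      simp [this]
    · rw [dif_neg (by omega), dif_neg (by simp; omega)]
      simp only [extendRay]
      rw [if_neg (by omega)]
      congr 1
      all_goals (simp only [List.length_cons]; omega)

lemma raySuffix_extendW {l : ℕ → A} {w : List A} (hw : raySuffix l w) (s : List A) :
    raySuffix (extendW l s) (w ++ s) := by
  intro k
  rcases k with ⟨k, hk⟩
  simp only [List.length_append] at hk
  simp only [List.length_append]
  rw [extendW_apply]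
  by_cases h : k < w.length
  · rw [dif_neg (by omega)]
    have e := hw ⟨k, h⟩
    simp only [List.get_eq_getElem] at e ⊢
    rw [List.getElem_append_left h, ← e]
    congr 1
    omega
  · rw [dif_pos (by omega)]
    simp only [List.get_eq_getElem]
    rw [List.getElem_append_right (by omega)]
    congr 1
    omega

lemma lang_of_raySuffix {l : ℕ → A} {m : List A}
    (hl : l ∈ LeftRays X) (h : raySuffix l m) : m ∈ lang X := by
  obtain ⟨x, hx, rfl⟩ := hl
  refine ⟨x, hx, -(m.length : ℤ), ?_⟩
  apply List.ext_getElem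
  · simp [cfgWord]
  · intro i h1 h2
    simp only [cfgWord, List.getElem_ofFn]
    have e := h ⟨i, h2⟩
    simp only [List.get_eq_getElem, leftRay] at e
    rw [← e]
    congr 1
    omega

end Aux

theorem stmt5 [Finite A] (X : Set (ℤ → A)) (hX : IsSubshift X)
    (w : List A) (hw : HalfSyncWord X w) (v : Set (ℕ → A)) (hv : KVertex X v) :
    FVertex X w v ↔ KReach X (follW X w) v := by
  constructor
  · exact fun h => h.2.1
  intro hr
  refine ⟨hv, hr, ?_⟩
  obtain ⟨hwlang, l, hlX, hsuf, hlang, hfoll⟩ := hw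
  -- invariant along the path
  have key : ∀ u, KReach X (follW X w) u →
      ∃ s : List A, u = follW X (w ++ s) ∧ (follW X (w ++ s)).Nonempty := by
    intro u hu
    induction hu with
    | refl =>
      refine ⟨[], by simp, ?_⟩
      rw [List.append_nil, ← hfoll]
      exact (mem_leftRays_iff X l).1 hlX
    | tail h1 h2 ih =>
      obtain ⟨s, rfl, hne⟩ := ih
      obtain ⟨a, l', hl', hl'a, hu, hv'⟩ := h2
      have hfl' : foll X l' = follW X (w ++ s) := hu.symm
      have step : foll X (extendRay l' a) = follW X (w ++ (s ++ [a])) := by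
        rw [foll_extendRay hX, hfl',
          show w ++ (s ++ [a]) = (w ++ s) ++ [a] from (List.append_assoc w s [a]).symm,
          follW_append (w ++ s) [a]]
        ext r
        simp only [Set.mem_setOf_eq, wordThen_singleton]
      refine ⟨s ++ [a], by rw [hv', step], ?_⟩
      rw [← step]
      exact (mem_leftRays_iff X _).1 hl'a
  obtain ⟨s, rfl, hne⟩ := key v hr
  -- the ray l extended by s
  set L := extendW l s with hL
  have hLfoll : foll X L = follW X (w ++ s) := by
    rw [hL, foll_extendW hX, follW_append]
    ext r
    simp [hfoll]
  have hLne : (foll X L).Nonempty := by rw [hLfoll]; exact hne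
  have hLmem : L ∈ LeftRays X := (mem_leftRays_iff X L).2 hLne
  have hws_lang : (w ++ s) ∈ lang X :=
    lang_of_raySuffix hLmem (raySuffix_extendW hsuf s)
  rw [← hlang] at hws_lang
  obtain ⟨j, hj⟩ := hws_lang
  set t := List.ofFn (fun i : Fin j => l (j - 1 - (i : ℕ))) with ht
  -- l ends with (w ++ s) ++ t
  have hsuf' : raySuffix l ((w ++ s) ++ t) := by
    intro k
    rcases k with ⟨k, hk⟩
    simp only [List.length_append, ht, List.length_ofFn] at hk
    simp only [List.length_append, ht, List.length_ofFn]
    by_cases h : k < (w ++ s).length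
    · have h' := h
      simp only [List.length_append] at h'
      have e := hj ⟨k, h⟩
      simp only [List.get_eq_getElem] at e ⊢
      rw [List.getElem_append_left h, ← e]
      congr 1
      simp only [List.length_append, ht, List.length_ofFn, Fin.val_mk]
      omega
    · have h' := h
      simp only [List.length_append] at h'
      simp only [List.get_eq_getElem]
      rw [List.getElem_append_right (by omega)]
      simp only [ht, List.getElem_ofFn]
      congr 1
      simp only [List.length_append, List.length_ofFn]
      omega
  have h1 : follW X ((w ++ s) ++ t) = follW X w := by
    apply Set.Subset.antisymm
    · obtain ⟨p, hp⟩ := raySuffix_decomp hsuf hsuf'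
        (by simp only [List.length_append]; omega)
      rw [hp]
      exact follW_prefix_subset hX p w
    · rw [← hfoll]
      exact foll_subset_follW hX hsuf'
  have h2 : foll X (extendW L t) = follW X ((w ++ s) ++ t) := by
    rw [foll_extendW hX, hLfoll, follW_append (w ++ s) t]
  have h2ne : (foll X (extendW L t)).Nonempty := by
    rw [h2, h1, ← hfoll]
    exact (mem_leftRays_iff X l).1 hlX
  have := kreach_extendW hX L t h2ne
  rw [hLfoll, h2, h1] at this
  exact this

end Paper
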